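/- Let K₁, K₂, K₃ be invertible n×n matrices, N an n×n matrix, and F an n×n matrix such that ‖F Kⱼ⁻¹‖ < 1 for j = 2, 3 and ‖K₁⁻¹ F‖ < 1. Define U₃ = K₁ K₂ (N K₂⁻¹ N − (I − F K₃⁻¹)⁻¹ N K₂⁻¹ (I − F K₂⁻¹)⁻¹ N (I − K₁⁻¹ F)⁻¹). Then ‖U₃‖ ≤ ‖K₁‖ ‖K₂‖ ‖N‖² ‖F‖ ‖K₂⁻¹‖ [‖K₁⁻¹‖ + ‖K₂⁻¹‖/(1 − ‖F‖‖K₂⁻¹‖) + ‖K₃⁻¹‖/((1 − ‖F‖‖K₃⁻¹‖)(1 − ‖F‖‖K₂⁻¹‖))] · 1/(1 − ‖K₁⁻¹‖‖F‖), provided also ‖F‖·‖Kⱼ⁻¹‖ < 1 for j = 2, 3 and ‖K₁⁻¹‖·‖F‖ < 1. -/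

import Mathlib

open scoped Matrix.Norms.L2Operator

/-!
Write `A, B, C` for the three resolvents `(1 - x)⁻¹`. Then
`PQ - APBQC = (1 - A)PBQC + P(1 - B)QC + PQ(1 - C)`, and the Neumann series gives
`‖(1 - x)⁻¹‖ ≤ 1/(1 - r)` and `‖1 - (1 - x)⁻¹‖ = ‖x(1 - x)⁻¹‖ ≤ r/(1 - r)` whenever `‖x‖ ≤ r < 1`.
Each of the three terms is therefore of first order in `‖F‖`.
-/

lemma Matrix.l2_opNorm_one_le {𝕜 n : Type*} [RCLike 𝕜] [Fintype n] [DecidableEq n] :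
    ‖(1 : Matrix n n 𝕜)‖ ≤ 1 := by
  rw [Matrix.cstar_norm_def, map_one]
  exact ContinuousLinearMap.norm_id_le

section NormedRing

variable {R : Type*} [NormedRing R] [HasSummableGeomSeries R]

lemma norm_inverse_one_sub_le (h1 : ‖(1 : R)‖ ≤ 1) {x : R} (hx : ‖x‖ < 1) :
    ‖Ring.inverse (1 - x)‖ ≤ (1 - ‖x‖)⁻¹ := by
  rw [← geom_series_eq_inverse x hx]
  linarith [tsum_geometric_le_of_norm_lt_one x hx]

lemma one_sub_inverse_one_sub {x : R} (hx : ‖x‖ < 1) :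
    1 - Ring.inverse (1 - x) = -(x * Ring.inverse (1 - x)) := by
  rw [← geom_series_eq_inverse x hx, geom_series_mul_shift x hx, geom_series_succ x hx]
  abel

lemma norm_inverse_one_sub_le_of_le (h1 : ‖(1 : R)‖ ≤ 1) {x : R} {r : ℝ} (hxr : ‖x‖ ≤ r)
    (hr : r < 1) : ‖Ring.inverse (1 - x)‖ ≤ (1 - r)⁻¹ := by
  have hx : ‖x‖ < 1 := hxr.trans_lt hr
  calc ‖Ring.inverse (1 - x)‖ ≤ (1 - ‖x‖)⁻¹ := norm_inverse_one_sub_le h1 hx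
    _ ≤ (1 - r)⁻¹ := by gcongr

lemma norm_one_sub_inverse_one_sub_le_of_le (h1 : ‖(1 : R)‖ ≤ 1) {x : R} {r : ℝ} (hxr : ‖x‖ ≤ r)
    (hr : r < 1) : ‖1 - Ring.inverse (1 - x)‖ ≤ r / (1 - r) := by
  rw [one_sub_inverse_one_sub (hxr.trans_lt hr), norm_neg, div_eq_mul_inv]
  exact (norm_mul_le _ _).trans
    (mul_le_mul hxr (norm_inverse_one_sub_le_of_le h1 hxr hr) (norm_nonneg _)
      ((norm_nonneg x).trans hxr))

end NormedRing

lemma norm_mul_sub_mul_mul_mul_mul_le {R : Type*} [NormedRing R] {P Q A B C : R}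
    {p q α b β c γ : ℝ} (hP : ‖P‖ ≤ p) (hQ : ‖Q‖ ≤ q) (hA : ‖1 - A‖ ≤ α) (hB : ‖B‖ ≤ b)
    (hB' : ‖1 - B‖ ≤ β) (hC : ‖C‖ ≤ c) (hC' : ‖1 - C‖ ≤ γ) :
    ‖P * Q - A * P * B * Q * C‖ ≤ α * p * b * q * c + p * β * q * c + p * q * γ := by
  have key : P * Q - A * P * B * Q * C =
      (1 - A) * P * B * Q * C + P * (1 - B) * Q * C + P * Q * (1 - C) := by
    noncomm_ring
  rw [key]
  refine norm_add₃_le.trans (add_le_add (add_le_add ?_ ?_) ?_)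
  · exact norm_mul_le_of_le
      (norm_mul_le_of_le (norm_mul_le_of_le (norm_mul_le_of_le hA hP) hB) hQ) hC
  · exact norm_mul_le_of_le (norm_mul_le_of_le (norm_mul_le_of_le hP hB') hQ) hC
  · exact norm_mul_le_of_le (norm_mul_le_of_le hP hQ) hC'

theorem U3_bound_general {n : Type*} [Fintype n] [DecidableEq n]
    (K₁ K₂ K₃ N F : Matrix n n ℂ)
    (h₂' : ‖F‖ * ‖K₂⁻¹‖ < 1) (h₃' : ‖F‖ * ‖K₃⁻¹‖ < 1) (h₁' : ‖K₁⁻¹‖ * ‖F‖ < 1) :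
    ‖K₁ * K₂ * (N * K₂⁻¹ * N -
        (1 - F * K₃⁻¹)⁻¹ * N * K₂⁻¹ * (1 - F * K₂⁻¹)⁻¹ * N * (1 - K₁⁻¹ * F)⁻¹)‖ ≤
      ‖K₁‖ * ‖K₂‖ * ‖N‖ ^ 2 * ‖F‖ * ‖K₂⁻¹‖ *
        (‖K₁⁻¹‖ + ‖K₂⁻¹‖ / (1 - ‖F‖ * ‖K₂⁻¹‖) +
          ‖K₃⁻¹‖ / ((1 - ‖F‖ * ‖K₃⁻¹‖) * (1 - ‖F‖ * ‖K₂⁻¹‖))) *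
        (1 / (1 - ‖K₁⁻¹‖ * ‖F‖)) := by
  have h1 := Matrix.l2_opNorm_one_le (𝕜 := ℂ) (n := n)
  have hα := norm_one_sub_inverse_one_sub_le_of_le h1 (norm_mul_le F K₃⁻¹) h₃'
  have hβ := norm_one_sub_inverse_one_sub_le_of_le h1 (norm_mul_le F K₂⁻¹) h₂'
  have hB := norm_inverse_one_sub_le_of_le h1 (norm_mul_le F K₂⁻¹) h₂'
  have hγ := norm_one_sub_inverse_one_sub_le_of_le h1 (norm_mul_le K₁⁻¹ F) h₁'
  have hC := norm_inverse_one_sub_le_of_le h1 (norm_mul_le K₁⁻¹ F) h₁'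
  simp only [← Matrix.nonsing_inv_eq_ringInverse] at hα hβ hB hγ hC
  have hd₁ : 0 < 1 - ‖K₁⁻¹‖ * ‖F‖ := by linarith
  have hd₂ : 0 < 1 - ‖F‖ * ‖K₂⁻¹‖ := by linarith
  have hd₃ : 0 < 1 - ‖F‖ * ‖K₃⁻¹‖ := by linarith
  rw [mul_assoc _ N K₂⁻¹]
  calc _ ≤ ‖K₁‖ * ‖K₂‖ * ‖N * K₂⁻¹ * N -
        (1 - F * K₃⁻¹)⁻¹ * (N * K₂⁻¹) * (1 - F * K₂⁻¹)⁻¹ * N * (1 - K₁⁻¹ * F)⁻¹‖ :=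
        norm_mul₃_le
    _ ≤ ‖K₁‖ * ‖K₂‖ * _ := mul_le_mul_of_nonneg_left
        (norm_mul_sub_mul_mul_mul_mul_le (norm_mul_le N K₂⁻¹) le_rfl hα hB hβ hC hγ) (by positivity)
    _ = _ := by field_simp; ring

theorem U3_bound {n : Type*} [Fintype n] [DecidableEq n]
    (K₁ K₂ K₃ N F : Matrix n n ℂ)
    (hK₁ : IsUnit K₁) (hK₂ : IsUnit K₂) (hK₃ : IsUnit K₃)
    (h₂ : ‖F * K₂⁻¹‖ < 1) (h₃ : ‖F * K₃⁻¹‖ < 1) (h₁ : ‖K₁⁻¹ * F‖ < 1)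
    (h₂' : ‖F‖ * ‖K₂⁻¹‖ < 1) (h₃' : ‖F‖ * ‖K₃⁻¹‖ < 1) (h₁' : ‖K₁⁻¹‖ * ‖F‖ < 1) :
    ‖K₁ * K₂ * (N * K₂⁻¹ * N -
        (1 - F * K₃⁻¹)⁻¹ * N * K₂⁻¹ * (1 - F * K₂⁻¹)⁻¹ * N * (1 - K₁⁻¹ * F)⁻¹)‖ ≤
      ‖K₁‖ * ‖K₂‖ * ‖N‖ ^ 2 * ‖F‖ * ‖K₂⁻¹‖ *
        (‖K₁⁻¹‖ + ‖K₂⁻¹‖ / (1 - ‖F‖ * ‖K₂⁻¹‖) +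
          ‖K₃⁻¹‖ / ((1 - ‖F‖ * ‖K₃⁻¹‖) * (1 - ‖F‖ * ‖K₂⁻¹‖))) *
        (1 / (1 - ‖K₁⁻¹‖ * ‖F‖)) :=
  U3_bound_general K₁ K₂ K₃ N F h₂' h₃' h₁'
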